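/- Smoothing preserves classicality: if ρ_{PQ} is a classical-quantum state with Q classical in the eigenbasis of σ_Q and ρ'_{PQ} ∈ B^ε(ρ_{PQ}) achieves the minimum of D_max(ρ'_{PQ} ‖ ρ'_P ⊗ σ_Q) over the ε-ball, then the state ρ''_{PQ} obtained by measuring ρ'_{PQ} in the eigenbasis of σ_Q satisfies ρ''_{PQ} ∈ B^ε(ρ_{PQ}) and D_max(ρ''_{PQ} ‖ ρ''_P ⊗ σ_Q) ≤ D_max(ρ'_{PQ} ‖ ρ'_P ⊗ σ_Q). -/

import Mathlib

open scoped Matrix Kronecker BigOperators ComplexOrder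
open Matrix

noncomputable section

namespace QIT

variable {n : Type*} [Fintype n] [DecidableEq n]

/-- Functional calculus for Hermitian matrices (junk value `0` otherwise). -/
def hcfc (A : Matrix n n ℂ) (f : ℝ → ℝ) : Matrix n n ℂ :=
  if h : A.IsHermitian then
    (h.eigenvectorUnitary : Matrix n n ℂ) * Matrix.diagonal ((↑) ∘ f ∘ h.eigenvalues) *
      (star h.eigenvectorUnitary : Matrix n n ℂ)
  else 0

/-- Positive semidefinite square root (junk otherwise). -/
def msqrt (A : Matrix n n ℂ) : Matrix n n ℂ := hcfc A Real.sqrt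

/-- Matrix logarithm on the support (log 0 = 0). -/
def mlog (A : Matrix n n ℂ) : Matrix n n ℂ := hcfc A Real.log

/-- Trace norm. -/
def traceNorm (A : Matrix n n ℂ) : ℝ := ((msqrt (Aᴴ * A)).trace).re

/-- Fidelity `‖√ρ√σ‖₁`. -/
def fidelity (ρ σ : Matrix n n ℂ) : ℝ := traceNorm (msqrt ρ * msqrt σ)

/-- Purified distance. -/
def purifiedDist (ρ σ : Matrix n n ℂ) : ℝ := Real.sqrt (1 - (fidelity ρ σ) ^ 2)

/-- A density matrix. -/
def IsState (ρ : Matrix n n ℂ) : Prop := ρ.PosSemidef ∧ ρ.trace = 1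

/-- Max-relative entropy (base 2). -/
def Dmax (ρ σ : Matrix n n ℂ) : ℝ := sInf {l : ℝ | ((2 : ℝ) ^ l • σ - ρ).PosSemidef}

/-- Smooth max-relative entropy. -/
def DmaxSmooth (ε : ℝ) (ρ σ : Matrix n n ℂ) : ℝ :=
  sInf {x : ℝ | ∃ ρ' : Matrix n n ℂ, IsState ρ' ∧ purifiedDist ρ' ρ ≤ ε ∧ x = Dmax ρ' σ}

/-- Umegaki relative entropy, in bits. -/
def relEnt (ρ σ : Matrix n n ℂ) : ℝ := ((ρ * (mlog ρ - mlog σ)).trace).re / Real.log 2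

/-- Partial trace over the second factor. -/
def ptraceRight {α β : Type*} [Fintype β] (M : Matrix (α × β) (α × β) ℂ) : Matrix α α ℂ :=
  Matrix.of fun i j => ∑ b, M (i, b) (j, b)

/-- Partial trace over the first factor. -/
def ptraceLeft {α β : Type*} [Fintype α] (M : Matrix (α × β) (α × β) ℂ) : Matrix β β ℂ :=
  Matrix.of fun i j => ∑ a, M (a, i) (a, j)

end QIT

open QIT

/-!
Pinching `M ↦ ∑_c P_c M P_c` along the classical register `Q` fixes `ρ_{PQ}`, every operator
`A ⊗ σ_Q` and the marginal on `P`.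

Fidelity: `√ρ_{PQ}` is block diagonal, so the fidelity of the pinched state with `ρ_{PQ}` is
`tr √(pinch X)` for `X = √ρ_{PQ} ρ' √ρ_{PQ}`. The diagonal of a positive matrix is a doubly
stochastic average of its spectrum, so concavity of `√` gives `tr √X ≤ tr √(pinch X)`, and the
purified distance can only decrease.

`D_max`: pinching maps `2^λ σ - ρ' ≥ 0` to `2^λ σ - ρ'' ≥ 0`, and the pinching inequality
`ρ' ≤ N · pinch ρ'` (`N` the number of classical values) keeps an infeasible problem infeasible.
-/

namespace QIT

section SquareRoot

open scoped MatrixOrder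

variable {n : Type*} [Fintype n] [DecidableEq n]

theorem msqrt_eq_cfcSqrt {A : Matrix n n ℂ} (hA : A.PosSemidef) : msqrt A = CFC.sqrt A := by
  rw [CFC.sqrt_eq_real_sqrt A (Matrix.nonneg_iff_posSemidef.mpr hA),
    cfcₙ_eq_cfc (hf0 := Real.sqrt_zero), hA.1.cfc_eq, msqrt, hcfc, dif_pos hA.1]
  rfl

theorem posSemidef_msqrt {A : Matrix n n ℂ} (hA : A.PosSemidef) : (msqrt A).PosSemidef := by
  rw [msqrt_eq_cfcSqrt hA, ← Matrix.nonneg_iff_posSemidef]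
  exact CFC.sqrt_nonneg A

theorem msqrt_mul_msqrt {A : Matrix n n ℂ} (hA : A.PosSemidef) : msqrt A * msqrt A = A := by
  rw [msqrt_eq_cfcSqrt hA]
  exact CFC.sqrt_mul_sqrt_self A (Matrix.nonneg_iff_posSemidef.mpr hA)

theorem msqrt_eq_of_mul_self {A B : Matrix n n ℂ} (hA : A.PosSemidef) (hB : B.PosSemidef)
    (h : B * B = A) : msqrt A = B := by
  rw [msqrt_eq_cfcSqrt hA]
  exact (CFC.sqrt_eq_iff A B (Matrix.nonneg_iff_posSemidef.mpr hA)
    (Matrix.nonneg_iff_posSemidef.mpr hB)).mpr h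

theorem re_trace_msqrt {A : Matrix n n ℂ} (hA : A.PosSemidef) :
    (msqrt A).trace.re = ∑ i, √(hA.1.eigenvalues i) := by
  rw [msqrt, hcfc, dif_pos hA.1, Matrix.trace_mul_cycle, Unitary.coe_star_mul_self, Matrix.one_mul,
    Matrix.trace_diagonal, Complex.re_sum]
  rfl

theorem msqrt_unitary_conj {A W : Matrix n n ℂ} (hA : A.PosSemidef)
    (hW : W ∈ unitaryGroup n ℂ) : msqrt (Wᴴ * A * W) = Wᴴ * msqrt A * W := by
  have hWW : W * Wᴴ = 1 := mem_unitaryGroup_iff.mp hW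
  refine msqrt_eq_of_mul_self (hA.conjTranspose_mul_mul_same W)
    ((posSemidef_msqrt hA).conjTranspose_mul_mul_same W) ?_
  calc Wᴴ * msqrt A * W * (Wᴴ * msqrt A * W) = Wᴴ * (msqrt A * (W * Wᴴ) * msqrt A) * W := by
        simp only [Matrix.mul_assoc]
    _ = Wᴴ * A * W := by rw [hWW, Matrix.mul_one, msqrt_mul_msqrt hA]

theorem trace_msqrt_unitary_conj {A W : Matrix n n ℂ} (hA : A.PosSemidef)
    (hW : W ∈ unitaryGroup n ℂ) : (msqrt (Wᴴ * A * W)).trace = (msqrt A).trace := by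
  rw [msqrt_unitary_conj hA hW, Matrix.trace_mul_cycle, ← Matrix.star_eq_conjTranspose,
    mem_unitaryGroup_iff.mp hW, Matrix.one_mul]

theorem sum_norm_sq_row_eq_one {U : Matrix n n ℂ} (hU : U ∈ unitaryGroup n ℂ) (i : n) :
    ∑ j, ‖U i j‖ ^ 2 = 1 := by
  have h : (U * star U) i i = 1 := by rw [mem_unitaryGroup_iff.mp hU, one_apply_eq]
  simp only [Matrix.mul_apply, Matrix.star_apply, RCLike.star_def, RCLike.mul_conj] at h
  norm_cast at h
  exact RCLike.ofReal_injective (h.trans RCLike.ofReal_one.symm)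

theorem sum_norm_sq_col_eq_one {U : Matrix n n ℂ} (hU : U ∈ unitaryGroup n ℂ) (j : n) :
    ∑ i, ‖U i j‖ ^ 2 = 1 := by
  have h : (star U * U) j j = 1 := by rw [mem_unitaryGroup_iff'.mp hU, one_apply_eq]
  simp only [Matrix.mul_apply, Matrix.star_apply, RCLike.star_def, RCLike.conj_mul] at h
  norm_cast at h
  exact RCLike.ofReal_injective (h.trans RCLike.ofReal_one.symm)

theorem _root_.Matrix.IsHermitian.star_eigenvectorUnitary_mul_mul {A : Matrix n n ℂ}
    (hA : A.IsHermitian) :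
    star (hA.eigenvectorUnitary : Matrix n n ℂ) * A * (hA.eigenvectorUnitary : Matrix n n ℂ) =
      diagonal (RCLike.ofReal ∘ hA.eigenvalues) := by
  simpa only [Unitary.conjStarAlgAut_apply, Unitary.coe_star, star_star] using
    hA.conjStarAlgAut_star_eigenvectorUnitary

theorem _root_.Matrix.IsHermitian.re_apply_self_eq_sum_eigenvalues {A : Matrix n n ℂ}
    (hA : A.IsHermitian) (i : n) :
    (A i i).re = ∑ j, ‖(hA.eigenvectorUnitary : Matrix n n ℂ) i j‖ ^ 2 * hA.eigenvalues j := by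
  conv_lhs => rw [hA.spectral_theorem, Unitary.conjStarAlgAut_apply]
  rw [Matrix.mul_apply, Complex.re_sum]
  refine Finset.sum_congr rfl fun j _ => ?_
  simp only [Matrix.mul_diagonal, Matrix.star_apply, RCLike.star_def, Function.comp_apply,
    mul_right_comm _ _ ((starRingEnd ℂ) _), RCLike.mul_conj]
  rw [← RCLike.ofReal_pow, ← RCLike.ofReal_mul]
  rfl

/-- Jensen for `√` with the doubly stochastic weights `‖U i j‖ ^ 2`, `U` diagonalising `A`. -/
theorem re_trace_msqrt_le_sum_sqrt_diag {A : Matrix n n ℂ} (hA : A.PosSemidef) :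
    (msqrt A).trace.re ≤ ∑ i, √(A i i).re := by
  set U := (hA.1.eigenvectorUnitary : Matrix n n ℂ)
  have hU : U ∈ unitaryGroup n ℂ := hA.1.eigenvectorUnitary.2
  rw [re_trace_msqrt hA]
  calc ∑ j, √(hA.1.eigenvalues j)
      = ∑ i, ∑ j, ‖U i j‖ ^ 2 * √(hA.1.eigenvalues j) := by
        rw [Finset.sum_comm]
        simp only [← Finset.sum_mul, sum_norm_sq_col_eq_one hU, one_mul]
    _ ≤ ∑ i, √(A i i).re := Finset.sum_le_sum fun i _ => by
        rw [hA.1.re_apply_self_eq_sum_eigenvalues]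
        exact Real.strictConcaveOn_sqrt.concaveOn.le_map_sum (fun j _ => sq_nonneg _)
          (sum_norm_sq_row_eq_one hU i) (fun j _ => hA.eigenvalues_nonneg j)

end SquareRoot

section Pinching

variable {m 𝒞 : Type*} [DecidableEq 𝒞]

/-- The pinching (dephasing) map: measuring the second tensor factor in its standard basis. -/
def pinch (M : Matrix (m × 𝒞) (m × 𝒞) ℂ) : Matrix (m × 𝒞) (m × 𝒞) ℂ :=
  blockDiagonal (blockDiag M)

theorem pinch_eq_of (M : Matrix (m × 𝒞) (m × 𝒞) ℂ) :
    pinch M = of fun i j => if i.2 = j.2 then M i j else 0 := by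
  ext ⟨i, c⟩ ⟨j, c'⟩
  by_cases h : c = c' <;> simp [pinch, blockDiagonal_apply, blockDiag_apply, h]

theorem pinch_eq_self {M : Matrix (m × 𝒞) (m × 𝒞) ℂ} (hM : ∀ i j, i.2 ≠ j.2 → M i j = 0) :
    pinch M = M := by
  ext i j
  rw [pinch_eq_of, of_apply]
  split_ifs with h
  · rfl
  · exact (hM i j h).symm

theorem pinch_sub (M N : Matrix (m × 𝒞) (m × 𝒞) ℂ) : pinch (M - N) = pinch M - pinch N := by
  simp only [pinch, blockDiag_sub, blockDiagonal_sub]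

theorem pinch_smul (r : ℝ) (M : Matrix (m × 𝒞) (m × 𝒞) ℂ) : pinch (r • M) = r • pinch M := by
  simp only [pinch, blockDiag_smul, blockDiagonal_smul]

variable [Fintype m] [Fintype 𝒞]

theorem trace_pinch (M : Matrix (m × 𝒞) (m × 𝒞) ℂ) : (pinch M).trace = M.trace := by
  rw [pinch, trace_blockDiagonal, Matrix.trace, Fintype.sum_prod_type_right]
  rfl

theorem blockDiag_blockDiagonal_mul_mul (f g : 𝒞 → Matrix m m ℂ) (M : Matrix (m × 𝒞) (m × 𝒞) ℂ)
    (c : 𝒞) : blockDiag (blockDiagonal f * M * blockDiagonal g) c = f c * blockDiag M c * g c := by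
  ext i j
  simp [blockDiag_apply, Matrix.mul_apply, Fintype.sum_prod_type, blockDiagonal_apply, ite_mul,
    mul_ite]

theorem pinch_blockDiagonal_mul_mul (f g : 𝒞 → Matrix m m ℂ) (M : Matrix (m × 𝒞) (m × 𝒞) ℂ) :
    pinch (blockDiagonal f * M * blockDiagonal g) =
      blockDiagonal f * pinch M * blockDiagonal g := by
  rw [pinch, pinch, ← blockDiagonal_mul, ← blockDiagonal_mul]
  exact congrArg _ (funext (blockDiag_blockDiagonal_mul_mul f g M))

variable [DecidableEq m]

theorem blockDiagonal_mem_unitaryGroup {f : 𝒞 → Matrix m m ℂ}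
    (hf : ∀ c, f c ∈ unitaryGroup m ℂ) : blockDiagonal f ∈ unitaryGroup (m × 𝒞) ℂ := by
  rw [mem_unitaryGroup_iff, star_eq_conjTranspose, blockDiagonal_conjTranspose,
    ← blockDiagonal_mul, ← blockDiagonal_one]
  exact congrArg _ (funext fun c => mem_unitaryGroup_iff.mp (hf c))

theorem posSemidef_blockDiagonal {f : 𝒞 → Matrix m m ℂ} (hf : ∀ c, (f c).PosSemidef) :
    (blockDiagonal f).PosSemidef := by
  have hsq : blockDiagonal f =
      (blockDiagonal fun c => msqrt (f c))ᴴ * blockDiagonal fun c => msqrt (f c) := by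
    rw [blockDiagonal_conjTranspose, ← blockDiagonal_mul]
    exact congrArg _ (funext fun c => by
      rw [(posSemidef_msqrt (hf c)).1.eq, msqrt_mul_msqrt (hf c)])
  rw [hsq]
  exact posSemidef_conjTranspose_mul_self _

theorem _root_.Matrix.PosSemidef.pinch {M : Matrix (m × 𝒞) (m × 𝒞) ℂ} (hM : M.PosSemidef) :
    (pinch M).PosSemidef :=
  posSemidef_blockDiagonal fun _ => hM.submatrix _

theorem msqrt_blockDiagonal {f : 𝒞 → Matrix m m ℂ} (hf : ∀ c, (f c).PosSemidef) :
    msqrt (blockDiagonal f) = blockDiagonal fun c => msqrt (f c) := by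
  refine msqrt_eq_of_mul_self (posSemidef_blockDiagonal hf)
    (posSemidef_blockDiagonal fun c => posSemidef_msqrt (hf c)) ?_
  rw [← blockDiagonal_mul]
  exact congrArg _ (funext fun c => msqrt_mul_msqrt (hf c))

theorem re_trace_msqrt_pinch {M : Matrix (m × 𝒞) (m × 𝒞) ℂ} (hM : M.PosSemidef) :
    (msqrt (pinch M)).trace.re = ∑ c, (msqrt (blockDiag M c)).trace.re := by
  rw [pinch, msqrt_blockDiagonal (f := blockDiag M) fun _ => hM.submatrix _, trace_blockDiagonal,
    Complex.re_sum]

/-- Conjugating by the block-diagonal unitary that diagonalises every block preserves `tr √X` and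
turns the diagonal of `X` into the spectra of the blocks. -/
theorem re_trace_msqrt_le_re_trace_msqrt_pinch {X : Matrix (m × 𝒞) (m × 𝒞) ℂ}
    (hX : X.PosSemidef) : (msqrt X).trace.re ≤ (msqrt (pinch X)).trace.re := by
  have hblk : ∀ c, (blockDiag X c).PosSemidef := fun c => hX.submatrix _
  set W := blockDiagonal fun c => ((hblk c).1.eigenvectorUnitary : Matrix m m ℂ)
  have hW : W ∈ unitaryGroup _ ℂ :=
    blockDiagonal_mem_unitaryGroup fun c => (hblk c).1.eigenvectorUnitary.2
  have hdiag : ∀ k c, (Wᴴ * X * W) (k, c) (k, c) = (hblk c).1.eigenvalues k := by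
    intro k c
    change blockDiag (Wᴴ * X * W) c k k = _
    rw [blockDiagonal_conjTranspose, blockDiag_blockDiagonal_mul_mul, ← star_eq_conjTranspose,
      (hblk c).1.star_eigenvectorUnitary_mul_mul]
    simp
  calc (msqrt X).trace.re = (msqrt (Wᴴ * X * W)).trace.re := by
        rw [trace_msqrt_unitary_conj hX hW]
    _ ≤ ∑ i, √((Wᴴ * X * W) i i).re :=
        re_trace_msqrt_le_sum_sqrt_diag (hX.conjTranspose_mul_mul_same W)
    _ = ∑ c, ∑ k, √((hblk c).1.eigenvalues k) := by
        rw [Fintype.sum_prod_type_right]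
        simp only [hdiag, Complex.ofReal_re]
    _ = (msqrt (pinch X)).trace.re := by
        simp only [re_trace_msqrt_pinch hX, re_trace_msqrt (hblk _)]

end Pinching

section Fidelity

variable {n : Type*} [Fintype n] [DecidableEq n]

theorem fidelity_nonneg (ρ σ : Matrix n n ℂ) : 0 ≤ fidelity ρ σ :=
  (Complex.nonneg_iff.mp (posSemidef_msqrt (posSemidef_conjTranspose_mul_self _)).trace_nonneg).1

theorem fidelity_eq_re_trace_msqrt {ρ σ : Matrix n n ℂ} (hρ : ρ.PosSemidef) (hσ : σ.PosSemidef) :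
    fidelity ρ σ = (msqrt (msqrt σ * ρ * msqrt σ)).trace.re := by
  have h : (msqrt ρ * msqrt σ)ᴴ * (msqrt ρ * msqrt σ) = msqrt σ * ρ * msqrt σ := by
    rw [conjTranspose_mul, (posSemidef_msqrt hρ).1.eq, (posSemidef_msqrt hσ).1.eq, Matrix.mul_assoc,
      ← Matrix.mul_assoc (msqrt ρ), msqrt_mul_msqrt hρ, ← Matrix.mul_assoc]
  rw [fidelity, traceNorm, h]

variable {m 𝒞 : Type*} [Fintype m] [DecidableEq m] [Fintype 𝒞] [DecidableEq 𝒞]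

theorem fidelity_le_fidelity_pinch {ρ σ : Matrix (m × 𝒞) (m × 𝒞) ℂ} (hρ : ρ.PosSemidef)
    (hσ : σ.PosSemidef) (hσρ : pinch σ = σ) : fidelity ρ σ ≤ fidelity (pinch ρ) σ := by
  have hS : msqrt σ = blockDiagonal fun c => msqrt (blockDiag σ c) := by
    conv_lhs => rw [← hσρ]
    exact msqrt_blockDiagonal fun _ => hσ.submatrix _
  have hX : (msqrt σ * ρ * msqrt σ).PosSemidef := by
    simpa only [(posSemidef_msqrt hσ).1.eq] using hρ.mul_mul_conjTranspose_same (msqrt σ)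
  rw [fidelity_eq_re_trace_msqrt hρ hσ, fidelity_eq_re_trace_msqrt hρ.pinch hσ, hS,
    ← pinch_blockDiagonal_mul_mul]
  rw [hS] at hX
  exact re_trace_msqrt_le_re_trace_msqrt_pinch hX

theorem purifiedDist_pinch_le {ρ σ : Matrix (m × 𝒞) (m × 𝒞) ℂ} (hρ : ρ.PosSemidef)
    (hσ : σ.PosSemidef) (hσρ : pinch σ = σ) : purifiedDist (pinch ρ) σ ≤ purifiedDist ρ σ := by
  unfold purifiedDist
  exact Real.sqrt_le_sqrt (sub_le_sub_left
    (pow_le_pow_left₀ (fidelity_nonneg ρ σ) (fidelity_le_fidelity_pinch hρ hσ hσρ) 2) 1)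

end Fidelity

section PinchingInequality

variable {m 𝒞 : Type*} [DecidableEq m] [DecidableEq 𝒞]

def blockProj (c : 𝒞) : Matrix (m × 𝒞) (m × 𝒞) ℂ :=
  diagonal fun i => if i.2 = c then 1 else 0

theorem blockProj_conjTranspose (c : 𝒞) :
    (blockProj c : Matrix (m × 𝒞) (m × 𝒞) ℂ)ᴴ = blockProj c := by
  simp [blockProj, diagonal_conjTranspose]

variable [Fintype 𝒞]

theorem sum_blockProj : ∑ c, (blockProj c : Matrix (m × 𝒞) (m × 𝒞) ℂ) = 1 := by
  ext i j
  simp [blockProj, Matrix.sum_apply, diagonal_apply, one_apply]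

variable [Fintype m]

theorem sum_blockProj_mul_mul_blockProj (M : Matrix (m × 𝒞) (m × 𝒞) ℂ) :
    ∑ c, blockProj c * M * blockProj c = pinch M := by
  ext i j
  rw [pinch_eq_of, Matrix.sum_apply, of_apply]
  simp [blockProj, diagonal_mul, mul_diagonal, eq_comm (a := i.2)]

theorem posSemidef_card_smul_pinch_sub {M : Matrix (m × 𝒞) (m × 𝒞) ℂ} (hM : M.PosSemidef) :
    ((Fintype.card 𝒞 : ℝ) • pinch M - M).PosSemidef := by
  set P : 𝒞 → Matrix (m × 𝒞) (m × 𝒞) ℂ := blockProj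
  have hP : ∀ c, (P c)ᴴ = P c := blockProj_conjTranspose
  have hterm : ∀ c c', ((P c - P c') * M * (P c - P c')).PosSemidef := fun c c' => by
    simpa only [conjTranspose_sub, hP] using hM.mul_mul_conjTranspose_same (P c - P c')
  have hexpand : ∀ c c', (P c - P c') * M * (P c - P c') =
      P c * M * P c + P c' * M * P c' - (P c * M * P c' + P c' * M * P c) := fun c c' => by
    noncomm_ring
  have hcross : ∑ c, ∑ c', P c * M * P c' = M := by
    simp only [← Finset.mul_sum, ← Finset.sum_mul, sum_blockProj, P, Matrix.one_mul, Matrix.mul_one]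
  have hsum : ∑ c, ∑ c', (P c - P c') * M * (P c - P c') =
      (2 : ℝ) • ((Fintype.card 𝒞 : ℝ) • pinch M - M) := by
    simp only [hexpand, Finset.sum_add_distrib, Finset.sum_sub_distrib, hcross]
    rw [Finset.sum_comm (f := fun c c' => P c' * M * P c), hcross]
    simp only [Finset.sum_const, Finset.card_univ, P, sum_blockProj_mul_mul_blockProj,
      ← Finset.smul_sum]
    rw [← Nat.cast_smul_eq_nsmul ℝ]
    module
  have h : (∑ c, ∑ c', (P c - P c') * M * (P c - P c')).PosSemidef :=
    posSemidef_sum _ fun c _ => posSemidef_sum _ fun c' _ => hterm c c'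
  rw [hsum] at h
  simpa only [smul_smul, inv_mul_cancel₀ (two_ne_zero (α := ℝ)), one_smul] using
    h.smul (inv_nonneg.mpr (zero_le_two (α := ℝ)))

end PinchingInequality

section MaxRelativeEntropy

variable {n : Type*}

theorem nonneg_of_posSemidef_rpow_smul_sub [Fintype n] {ρ σ : Matrix n n ℂ} (hρ : ρ.trace = 1)
    (hσ : σ.trace = 1) {l : ℝ} (h : ((2 : ℝ) ^ l • σ - ρ).PosSemidef) : 0 ≤ l := by
  have htr := (Complex.nonneg_iff.mp h.trace_nonneg).1
  rw [trace_sub, trace_smul, hρ, hσ] at htr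
  have h1 : (2 : ℝ) ^ (0 : ℝ) ≤ 2 ^ l := by simpa using htr
  exact (Real.rpow_le_rpow_left_iff one_lt_two).mp h1

theorem posSemidef_rpow_smul_sub_of_posSemidef_smul_sub {ρ ρ₀ σ : Matrix n n ℂ} {c l : ℝ}
    (hc : 0 < c) (hρ : (c • ρ₀ - ρ).PosSemidef) (hρ₀ : ((2 : ℝ) ^ l • σ - ρ₀).PosSemidef) :
    ((2 : ℝ) ^ (l + Real.logb 2 c) • σ - ρ).PosSemidef := by
  have e : (2 : ℝ) ^ (l + Real.logb 2 c) • σ - ρ = c • ((2 : ℝ) ^ l • σ - ρ₀) + (c • ρ₀ - ρ) := by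
    rw [Real.rpow_add two_pos, Real.rpow_logb two_pos (by norm_num) hc]
    module
  rw [e]
  exact (hρ₀.smul hc.le).add hρ

/-- `sInf ∅ = 0` in `ℝ`, so infeasibility has to be transferred (`hback`) as well as
feasibility. -/
theorem Dmax_le_Dmax {ρ₁ σ₁ ρ₂ σ₂ : Matrix n n ℂ}
    (hmono : ∀ l : ℝ, ((2 : ℝ) ^ l • σ₁ - ρ₁).PosSemidef → ((2 : ℝ) ^ l • σ₂ - ρ₂).PosSemidef)
    (hback : ∀ l : ℝ, ((2 : ℝ) ^ l • σ₂ - ρ₂).PosSemidef →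
      ∃ l' : ℝ, ((2 : ℝ) ^ l' • σ₁ - ρ₁).PosSemidef)
    (hbdd : BddBelow {l : ℝ | ((2 : ℝ) ^ l • σ₂ - ρ₂).PosSemidef}) :
    Dmax ρ₂ σ₂ ≤ Dmax ρ₁ σ₁ := by
  rcases Set.eq_empty_or_nonempty {l : ℝ | ((2 : ℝ) ^ l • σ₁ - ρ₁).PosSemidef} with h₁ | h₁
  · have h₂ : {l : ℝ | ((2 : ℝ) ^ l • σ₂ - ρ₂).PosSemidef} = ∅ :=
      Set.eq_empty_of_forall_notMem fun l hl => by
        obtain ⟨l', hl'⟩ := hback l hl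
        exact Set.eq_empty_iff_forall_notMem.mp h₁ l' hl'
    rw [Dmax, Dmax, h₁, h₂]
  · exact csInf_le_csInf hbdd h₁ hmono

variable {m 𝒞 : Type*} [Fintype m] [DecidableEq m] [Fintype 𝒞] [DecidableEq 𝒞]

theorem Dmax_pinch_le {ρ σ : Matrix (m × 𝒞) (m × 𝒞) ℂ} (hρ : IsState ρ) (hσ : σ.trace = 1)
    (hσρ : pinch σ = σ) : Dmax (pinch ρ) σ ≤ Dmax ρ σ := by
  have hpinch : ∀ l : ℝ, pinch ((2 : ℝ) ^ l • σ - ρ) = (2 : ℝ) ^ l • σ - pinch ρ := fun l => by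
    rw [pinch_sub, pinch_smul, hσρ]
  have : Nonempty 𝒞 := by
    by_contra h
    rw [not_nonempty_iff] at h
    simp [Matrix.trace] at hσ
  have hN : (0 : ℝ) < Fintype.card 𝒞 := by exact_mod_cast Fintype.card_pos
  refine Dmax_le_Dmax (fun l hl => hpinch l ▸ hl.pinch) (fun l hl => ⟨_,
    posSemidef_rpow_smul_sub_of_posSemidef_smul_sub hN (posSemidef_card_smul_pinch_sub hρ.1) hl⟩)
    ⟨0, fun l hl => nonneg_of_posSemidef_rpow_smul_sub (by rw [trace_pinch, hρ.2]) hσ hl⟩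

end MaxRelativeEntropy

section ClassicalQuantum

variable {m 𝒞 : Type*}

theorem trace_ptraceRight [Fintype m] [Fintype 𝒞] (M : Matrix (m × 𝒞) (m × 𝒞) ℂ) :
    (ptraceRight M).trace = M.trace := by
  simp [Matrix.trace, ptraceRight, Fintype.sum_prod_type]

theorem ptraceRight_pinch [Fintype 𝒞] [DecidableEq 𝒞] (M : Matrix (m × 𝒞) (m × 𝒞) ℂ) :
    ptraceRight (pinch M) = ptraceRight M := by
  ext i j
  simp [ptraceRight, pinch_eq_of]

theorem pinch_kronecker_diagonal [DecidableEq 𝒞] (A : Matrix m m ℂ) (d : 𝒞 → ℂ) :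
    pinch (A ⊗ₖ diagonal d) = A ⊗ₖ diagonal d :=
  pinch_eq_self fun _ _ h => by simp [kroneckerMap_apply, diagonal_apply_ne _ h]

theorem pinch_sum_smul_kronecker_single [Fintype 𝒞] [DecidableEq 𝒞] (p : 𝒞 → ℝ)
    (ρ : 𝒞 → Matrix m m ℂ) :
    pinch (∑ c, p c • (ρ c ⊗ₖ single c c (1 : ℂ))) = ∑ c, p c • (ρ c ⊗ₖ single c c (1 : ℂ)) :=
  pinch_eq_self fun i j h => by
    refine (Matrix.sum_apply _ _ _ _).trans (Finset.sum_eq_zero fun c _ => ?_)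
    simp only [Matrix.smul_apply, kroneckerMap_apply, single_apply]
    rw [if_neg fun hc => h (hc.1.symm.trans hc.2), mul_zero, smul_zero]

theorem posSemidef_sum_smul_kronecker_single [Fintype m] [Fintype 𝒞] [DecidableEq 𝒞]
    {p : 𝒞 → ℝ} (hp : ∀ c, 0 ≤ p c) {ρ : 𝒞 → Matrix m m ℂ} (hρ : ∀ c, (ρ c).PosSemidef) :
    (∑ c, p c • (ρ c ⊗ₖ single c c (1 : ℂ))).PosSemidef := by
  have hsingle : ∀ c : 𝒞, (single c c (1 : ℂ)).PosSemidef := fun c => by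
    rw [← diagonal_single]
    exact PosSemidef.diagonal (Pi.single_nonneg.mpr zero_le_one)
  exact posSemidef_sum _ fun c _ => ((hρ c).kronecker (hsingle c)).smul (hp c)

end ClassicalQuantum

end QIT

theorem smoothing_preserves_classicality_general {dP 𝒞 : Type*} [Fintype dP] [DecidableEq dP]
    [Fintype 𝒞] [DecidableEq 𝒞]
    (p q : 𝒞 → ℝ) (hp : ∀ c, 0 ≤ p c)
    (hq1 : ∑ c, q c = 1)
    (ρc : 𝒞 → Matrix dP dP ℂ) (hρc : ∀ c, IsState (ρc c))
    (ρPQ : Matrix (dP × 𝒞) (dP × 𝒞) ℂ)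
    (hρPQ : ρPQ = ∑ c, p c • (ρc c ⊗ₖ Matrix.single c c (1 : ℂ)))
    (σQ : Matrix 𝒞 𝒞 ℂ) (hσQ : σQ = Matrix.diagonal (fun c => (q c : ℂ)))
    (ε : ℝ)
    (ρ' : Matrix (dP × 𝒞) (dP × 𝒞) ℂ) (hρ' : IsState ρ')
    (hball : purifiedDist ρ' ρPQ ≤ ε)
    (ρ'' : Matrix (dP × 𝒞) (dP × 𝒞) ℂ)
    (hρ'' : ρ'' = Matrix.of fun i j => if i.2 = j.2 then ρ' i j else 0) :
    purifiedDist ρ'' ρPQ ≤ ε ∧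
      Dmax ρ'' (ptraceRight ρ'' ⊗ₖ σQ) ≤ Dmax ρ' (ptraceRight ρ' ⊗ₖ σQ) := by
  rw [← pinch_eq_of] at hρ''
  subst hρ'' hρPQ hσQ
  have htrace : (ptraceRight ρ' ⊗ₖ diagonal fun c => (q c : ℂ)).trace = 1 := by
    rw [trace_kronecker, trace_ptraceRight, hρ'.2, trace_diagonal, one_mul, ← Complex.ofReal_sum,
      hq1, Complex.ofReal_one]
  have hρPQ := posSemidef_sum_smul_kronecker_single hp fun c => (hρc c).1
  refine ⟨(purifiedDist_pinch_le hρ'.1 hρPQ (pinch_sum_smul_kronecker_single p ρc)).trans hball,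
    ?_⟩
  rw [ptraceRight_pinch]
  exact Dmax_pinch_le hρ' htrace (pinch_kronecker_diagonal _ _)

/-- Smoothing preserves classicality: if `ρ_{PQ}` is classical-quantum with `Q`
classical in the eigenbasis of `σ_Q`, and `ρ'_{PQ} ∈ B^ε(ρ_{PQ})` achieves the minimum
of `D_max(·‖(·)_P ⊗ σ_Q)` over the ε-ball, then the state `ρ''` obtained by measuring
(pinching) `ρ'` in the eigenbasis of `σ_Q` satisfies `ρ'' ∈ B^ε(ρ_{PQ})` and
`D_max(ρ''‖ρ''_P⊗σ_Q) ≤ D_max(ρ'‖ρ'_P⊗σ_Q)`. -/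
theorem smoothing_preserves_classicality {dP 𝒞 : Type*} [Fintype dP] [DecidableEq dP]
    [Fintype 𝒞] [DecidableEq 𝒞]
    (p q : 𝒞 → ℝ) (hp : ∀ c, 0 ≤ p c) (hp1 : ∑ c, p c = 1)
    (hq : ∀ c, 0 ≤ q c) (hq1 : ∑ c, q c = 1)
    (ρc : 𝒞 → Matrix dP dP ℂ) (hρc : ∀ c, IsState (ρc c))
    (ρPQ : Matrix (dP × 𝒞) (dP × 𝒞) ℂ)
    (hρPQ : ρPQ = ∑ c, p c • (ρc c ⊗ₖ Matrix.single c c (1 : ℂ)))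
    (σQ : Matrix 𝒞 𝒞 ℂ) (hσQ : σQ = Matrix.diagonal (fun c => (q c : ℂ)))
    (ε : ℝ) (hε : ε ∈ Set.Ioo (0 : ℝ) 1)
    (ρ' : Matrix (dP × 𝒞) (dP × 𝒞) ℂ) (hρ' : IsState ρ')
    (hball : purifiedDist ρ' ρPQ ≤ ε)
    (hopt : Dmax ρ' (ptraceRight ρ' ⊗ₖ σQ)
      = sInf {x : ℝ | ∃ ρ₀ : Matrix (dP × 𝒞) (dP × 𝒞) ℂ,
          IsState ρ₀ ∧ purifiedDist ρ₀ ρPQ ≤ ε ∧ x = Dmax ρ₀ (ptraceRight ρ₀ ⊗ₖ σQ)})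
    (ρ'' : Matrix (dP × 𝒞) (dP × 𝒞) ℂ)
    (hρ'' : ρ'' = Matrix.of fun i j => if i.2 = j.2 then ρ' i j else 0) :
    purifiedDist ρ'' ρPQ ≤ ε ∧
      Dmax ρ'' (ptraceRight ρ'' ⊗ₖ σQ) ≤ Dmax ρ' (ptraceRight ρ' ⊗ₖ σQ) :=
  smoothing_preserves_classicality_general p q hp hq1 ρc hρc ρPQ hρPQ σQ hσQ ε ρ' hρ' hball ρ'' hρ''
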